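/- In a tree-graded space F, let x ∈ F and let T_x be the set of points y ∈ F such that every geodesic from x to y intersects every piece in at most one point. If y ∈ T_x, then T_x = T_y. -/

import Mathlib

/-- A map `γ` is a geodesic (unit-speed) on the interval `[a,b]`. -/
def IsGeodesicOn {F : Type*} [MetricSpace F] (γ : ℝ → F) (a b : ℝ) : Prop :=
  ∀ s ∈ Set.Icc a b, ∀ t ∈ Set.Icc a b, dist (γ s) (γ t) = |s - t|

/-- A metric space is geodesic if every two points are joined by a geodesic. -/
def GeodesicSpace (F : Type*) [MetricSpace F] : Prop :=
  ∀ x y : F, ∃ γ : ℝ → F, γ 0 = x ∧ γ (dist x y) = y ∧ IsGeodesicOn γ 0 (dist x y)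

/-- A subset is geodesic: any two of its points are joined by a geodesic inside it. -/
def GeodesicSubset {F : Type*} [MetricSpace F] (p : Set F) : Prop :=
  ∀ x ∈ p, ∀ y ∈ p, ∃ γ : ℝ → F, γ 0 = x ∧ γ (dist x y) = y ∧
    IsGeodesicOn γ 0 (dist x y) ∧ γ '' Set.Icc 0 (dist x y) ⊆ p

/-- A nontrivial simple geodesic triangle: a simple loop `γ` on `[0,L]` composed of three
geodesics `[0,a]`, `[a,b]`, `[b,L]`. -/
structure SimpleGeodesicTriangle {F : Type*} [MetricSpace F]
    (γ : ℝ → F) (a b L : ℝ) : Prop where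
  L_pos : 0 < L
  ha : 0 ≤ a
  hab : a ≤ b
  hbL : b ≤ L
  side1 : IsGeodesicOn γ 0 a
  side2 : IsGeodesicOn γ a b
  side3 : IsGeodesicOn γ b L
  closed : γ 0 = γ L
  simple : Set.InjOn γ (Set.Ico 0 L)

/-- `F` is tree-graded with respect to the collection `P` of pieces. -/
structure IsTreeGraded {F : Type*} [MetricSpace F] (P : Set (Set F)) : Prop where
  pieces_nonempty : ∀ p ∈ P, p.Nonempty
  pieces_closed : ∀ p ∈ P, IsClosed p
  pieces_geodesic : ∀ p ∈ P, GeodesicSubset p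
  T1 : ∀ p ∈ P, ∀ q ∈ P, p ≠ q → (p ∩ q).Subsingleton
  T2 : ∀ (γ : ℝ → F) (a b L : ℝ), SimpleGeodesicTriangle γ a b L →
    ∃ p ∈ P, γ '' Set.Icc 0 L ⊆ p

/-- The transversal tree of `F` at `x`: the set of points `y` such that every geodesic
from `x` to `y` intersects every piece in at most one point. -/
def transversalTree {F : Type*} [MetricSpace F] (P : Set (Set F)) (x : F) : Set F :=
  {y | ∀ γ : ℝ → F, γ 0 = x → γ (dist x y) = y → IsGeodesicOn γ 0 (dist x y) →
    ∀ p ∈ P, (γ '' Set.Icc 0 (dist x y) ∩ p).Subsingleton}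

/-!
Reversing geodesics shows that `y ∈ T_x` implies `x ∈ T_y`, so it suffices to show that
`y, z ∈ T_x` implies `z ∈ T_y`: in a geodesic triangle `xyz` whose sides `[x,y]` and `[x,z]` meet
every piece at most once, so does `[y,z]`.

The basic tool is that a simple bigon, being a degenerate simple triangle, lies in a piece. Where
two geodesics with common endpoints differ they bound such a bigon; hence pieces are geodesically
convex, and two geodesics with common endpoints meet the same pieces in at least two points.

Suppose `[y,z]` meets a piece `p` twice, hence along a nontrivial segment. Let `ρ` be the last
time `[y,z]` agrees with `[y,x]` and `e'` the first later time it agrees with `[z,x]`. If the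
segment ends by time `ρ` or reaches beyond `e'`, the bigon argument moves two points of `p` onto
`[x,y]` or `[x,z]`. Otherwise a nontrivial part of it lies on the middle side of the simple
triangle cut out by the three sides between their last common points. That triangle lies in a
piece, which must be `p`, so its side along `[x,z]` lies in `p` and is a single point. But then
the other two sides of the triangle meet beyond `ρ`, contradicting the choice of `ρ`.
-/

open Set

lemma exists_lt_of_nontrivial_image_inter {X : Type*} {γ : ℝ → X} {I : Set ℝ} {p : Set X}
    (h : (γ '' I ∩ p).Nontrivial) : ∃ s ∈ I, ∃ t ∈ I, s < t ∧ γ s ∈ p ∧ γ t ∈ p := by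
  obtain ⟨_, ⟨⟨s, hs, rfl⟩, hsp⟩, _, ⟨⟨t, ht, rfl⟩, htp⟩, hne⟩ := h
  rcases lt_or_gt_of_ne (ne_of_apply_ne γ hne) with hst | hts
  exacts [⟨s, hs, t, ht, hst, hsp, htp⟩, ⟨t, ht, s, hs, hts, htp, hsp⟩]

noncomputable def concatArcs {X : Type*} (σ₁ σ₂ σ₃ : ℝ → X) (ℓ₁ ℓ₂ : ℝ) (u : ℝ) : X :=
  if u ≤ ℓ₁ then σ₁ u else if u ≤ ℓ₁ + ℓ₂ then σ₂ (u - ℓ₁) else σ₃ (u - (ℓ₁ + ℓ₂))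

section concatArcs

variable {X : Type*} {σ₁ σ₂ σ₃ : ℝ → X} {ℓ₁ ℓ₂ : ℝ}

lemma concatArcs_of_le {u : ℝ} (hu : u ≤ ℓ₁) : concatArcs σ₁ σ₂ σ₃ ℓ₁ ℓ₂ u = σ₁ u :=
  if_pos hu

lemma concatArcs_of_mem_Icc (h₁₂ : σ₁ ℓ₁ = σ₂ 0) {u : ℝ} (hu : u ∈ Icc ℓ₁ (ℓ₁ + ℓ₂)) :
    concatArcs σ₁ σ₂ σ₃ ℓ₁ ℓ₂ u = σ₂ (u - ℓ₁) := by
  by_cases hu₁ : u ≤ ℓ₁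
  · rw [concatArcs_of_le hu₁, le_antisymm hu₁ hu.1, sub_self, h₁₂]
  · rw [concatArcs, if_neg hu₁, if_pos hu.2]

lemma concatArcs_of_ge (h₁₂ : σ₁ ℓ₁ = σ₂ 0) (h₂₃ : σ₂ ℓ₂ = σ₃ 0) (hℓ₂ : 0 ≤ ℓ₂) {u : ℝ}
    (hu : ℓ₁ + ℓ₂ ≤ u) : concatArcs σ₁ σ₂ σ₃ ℓ₁ ℓ₂ u = σ₃ (u - (ℓ₁ + ℓ₂)) := by
  by_cases hu₂ : u ≤ ℓ₁ + ℓ₂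
  · obtain rfl : u = ℓ₁ + ℓ₂ := le_antisymm hu₂ hu
    rw [concatArcs_of_mem_Icc h₁₂ ⟨by linarith, le_rfl⟩, add_sub_cancel_left, sub_self, h₂₃]
  · rw [concatArcs, if_neg (by linarith), if_neg hu₂]

end concatArcs

section

variable {F : Type*} [MetricSpace F]

lemma isCompact_Icc_inter_eq {f g : ℝ → F} {a b : ℝ} (hf : ContinuousOn f (Icc a b))
    (hg : ContinuousOn g (Icc a b)) : IsCompact {r ∈ Icc a b | f r = g r} :=
  isCompact_Icc.of_isClosed_subset
    ((hf.prodMk hg).preimage_isClosed_of_isClosed isClosed_Icc isClosed_diagonal) fun _ h => h.1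

lemma exists_isGreatest_coincidence {f g : ℝ → F} {a b : ℝ} (hab : a ≤ b)
    (hf : ContinuousOn f (Icc a b)) (hg : ContinuousOn g (Icc a b)) (ha : f a = g a) :
    ∃ c ∈ Icc a b, f c = g c ∧ ∀ r ∈ Icc a b, f r = g r → r ≤ c := by
  obtain ⟨c, ⟨hc, hfc⟩, hmax⟩ :=
    (isCompact_Icc_inter_eq hf hg).exists_isGreatest ⟨a, ⟨le_rfl, hab⟩, ha⟩
  exact ⟨c, hc, hfc, fun r hr hfr => hmax ⟨hr, hfr⟩⟩

lemma exists_isLeast_coincidence {f g : ℝ → F} {a b : ℝ} (hab : a ≤ b)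
    (hf : ContinuousOn f (Icc a b)) (hg : ContinuousOn g (Icc a b)) (hb : f b = g b) :
    ∃ c ∈ Icc a b, f c = g c ∧ ∀ r ∈ Icc a b, f r = g r → c ≤ r := by
  obtain ⟨c, ⟨hc, hfc⟩, hmin⟩ :=
    (isCompact_Icc_inter_eq hf hg).exists_isLeast ⟨b, ⟨hab, le_rfl⟩, hb⟩
  exact ⟨c, hc, hfc, fun r hr hfr => hmin ⟨hr, hfr⟩⟩

namespace IsGeodesicOn

variable {γ γ₁ γ₂ : ℝ → F} {a b : ℝ}

lemma dist_left (h : IsGeodesicOn γ a b) {r : ℝ} (hr : r ∈ Icc a b) :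
    dist (γ a) (γ r) = r - a := by
  rw [h a ⟨le_rfl, hr.1.trans hr.2⟩ r hr, abs_sub_comm, abs_of_nonneg (sub_nonneg.2 hr.1)]

lemma dist_right (h : IsGeodesicOn γ a b) {r : ℝ} (hr : r ∈ Icc a b) :
    dist (γ r) (γ b) = b - r := by
  rw [h r hr b ⟨hr.1.trans hr.2, le_rfl⟩, abs_sub_comm, abs_of_nonneg (sub_nonneg.2 hr.2)]

lemma injOn (h : IsGeodesicOn γ a b) : InjOn γ (Icc a b) := fun s hs t ht hst => by
  have := h s hs t ht
  rwa [hst, dist_self, eq_comm, abs_eq_zero, sub_eq_zero] at this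

lemma continuousOn (h : IsGeodesicOn γ a b) : ContinuousOn γ (Icc a b) :=
  (LipschitzOnWith.of_dist_le_mul (K := 1) fun s hs t ht => by
    rw [h s hs t ht, NNReal.coe_one, one_mul, Real.dist_eq]).continuousOn

lemma mono (h : IsGeodesicOn γ a b) {a' b' : ℝ} (ha : a ≤ a') (hb : b' ≤ b) :
    IsGeodesicOn γ a' b' := fun s hs t ht =>
  h s (Icc_subset_Icc ha hb hs) t (Icc_subset_Icc ha hb ht)

lemma congr (h : IsGeodesicOn γ₁ a b) (heq : EqOn γ₁ γ₂ (Icc a b)) : IsGeodesicOn γ₂ a b :=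
  fun s hs t ht => by rw [← heq hs, ← heq ht]; exact h s hs t ht

lemma const (x : F) (a : ℝ) : IsGeodesicOn (fun _ => x) a a := fun s hs t ht => by
  rw [dist_self, le_antisymm hs.2 hs.1, le_antisymm ht.2 ht.1, sub_self, abs_zero]

lemma comp_add_const (h : IsGeodesicOn γ a b) (c : ℝ) :
    IsGeodesicOn (fun u => γ (u + c)) (a - c) (b - c) := fun s hs t ht => by
  rw [h _ (add_mem_Icc_iff_left.2 hs) _ (add_mem_Icc_iff_left.2 ht), add_sub_add_right_eq_sub]

lemma comp_sub_const (h : IsGeodesicOn γ a b) (c : ℝ) :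
    IsGeodesicOn (fun u => γ (u - c)) (a + c) (b + c) := fun s hs t ht => by
  rw [h _ (sub_mem_Icc_iff_left.2 hs) _ (sub_mem_Icc_iff_left.2 ht), sub_sub_sub_cancel_right]

lemma comp_const_sub (h : IsGeodesicOn γ a b) (c : ℝ) :
    IsGeodesicOn (fun u => γ (c - u)) (c - b) (c - a) := fun s hs t ht => by
  rw [h _ (sub_mem_Icc_iff_right.2 hs) _ (sub_mem_Icc_iff_right.2 ht), sub_sub_sub_cancel_left,
    abs_sub_comm]

lemma eq_of_apply_eq (h₁ : IsGeodesicOn γ₁ a b) {b' : ℝ} (h₂ : IsGeodesicOn γ₂ a b')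
    (ha : γ₁ a = γ₂ a) {r r' : ℝ} (hr : r ∈ Icc a b) (hr' : r' ∈ Icc a b')
    (he : γ₁ r = γ₂ r') : r = r' := by
  have := h₁.dist_left hr
  rw [ha, he, h₂.dist_left hr'] at this
  linarith

lemma eq_of_apply_eq_of_right (h₁ : IsGeodesicOn γ₁ a b) {a' : ℝ} (h₂ : IsGeodesicOn γ₂ a' b)
    (hb : γ₁ b = γ₂ b) {r r' : ℝ} (hr : r ∈ Icc a b) (hr' : r' ∈ Icc a' b)
    (he : γ₁ r = γ₂ r') : r = r' := by
  have := h₁.dist_right hr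
  rw [hb, he, h₂.dist_right hr'] at this
  linarith

lemma apply_ne_of_last_coincidence (h₁ : IsGeodesicOn γ₁ a b) {b' ρ : ℝ}
    (h₂ : IsGeodesicOn γ₂ a b') (ha : γ₁ a = γ₂ a) (haρ : a ≤ ρ)
    (hρ : ∀ r ∈ Icc a (min b b'), γ₁ r = γ₂ r → r ≤ ρ) :
    ∀ u ∈ Icc a b, ∀ v ∈ Ioc ρ b', γ₁ u ≠ γ₂ v := by
  intro u hu v hv huv
  obtain rfl := h₁.eq_of_apply_eq h₂ ha hu ⟨haρ.trans hv.1.le, hv.2⟩ huv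
  exact hv.1.not_ge (hρ u ⟨hu.1, le_min hu.2 hv.2⟩ huv)

lemma apply_ne_of_first_coincidence (h₁ : IsGeodesicOn γ₁ a b) {a' e : ℝ}
    (h₂ : IsGeodesicOn γ₂ a' b) (hb : γ₁ b = γ₂ b) (heb : e ≤ b)
    (he : ∀ r ∈ Icc (max a a') b, γ₁ r = γ₂ r → e ≤ r) :
    ∀ u ∈ Icc a b, ∀ v ∈ Ico a' e, γ₁ u ≠ γ₂ v := by
  intro u hu v hv huv
  obtain rfl := h₁.eq_of_apply_eq_of_right h₂ hb hu ⟨hv.1, hv.2.le.trans heb⟩ huv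
  exact hv.2.not_ge (he u ⟨max_le hu.1 hv.1, hu.2⟩ huv)

lemma nontrivial_image_inter (h : IsGeodesicOn γ a b) {p : Set F} {s t : ℝ}
    (hp : γ '' Icc s t ⊆ p) (hst : max a s < min b t) : (γ '' Icc a b ∩ p).Nontrivial := by
  have hu : max a s ∈ Icc a b ∩ Icc s t :=
    ⟨⟨le_max_left _ _, hst.le.trans (min_le_left _ _)⟩,
      ⟨le_max_right _ _, hst.le.trans (min_le_right _ _)⟩⟩
  have hv : min b t ∈ Icc a b ∩ Icc s t :=
    ⟨⟨(le_max_left _ _).trans hst.le, min_le_left _ _⟩,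
      ⟨(le_max_right _ _).trans hst.le, min_le_right _ _⟩⟩
  exact ⟨_, ⟨mem_image_of_mem γ hu.1, hp (mem_image_of_mem γ hu.2)⟩, _,
    ⟨mem_image_of_mem γ hv.1, hp (mem_image_of_mem γ hv.2)⟩,
    fun he => hst.ne (h.injOn hu.1 hv.1 he)⟩

end IsGeodesicOn

section concatArcs

variable {σ₁ σ₂ σ₃ : ℝ → F} {ℓ₁ ℓ₂ ℓ₃ : ℝ}

/-- The loop is the disjoint union of `σ₁` on `[0, ℓ₁]`, `σ₂` on `(0, ℓ₂]` and `σ₃` on `(0, ℓ₃)`;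
the hypotheses `d₁₂, d₁₃, d₂₃` say that these have disjoint images. -/
lemma injOn_concatArcs (h₁ : IsGeodesicOn σ₁ 0 ℓ₁) (h₂ : IsGeodesicOn σ₂ 0 ℓ₂)
    (h₃ : IsGeodesicOn σ₃ 0 ℓ₃)
    (d₁₂ : ∀ u ∈ Icc 0 ℓ₁, ∀ v ∈ Ioc 0 ℓ₂, σ₁ u ≠ σ₂ v)
    (d₁₃ : ∀ u ∈ Icc 0 ℓ₁, ∀ v ∈ Ioo 0 ℓ₃, σ₁ u ≠ σ₃ v)
    (d₂₃ : ∀ u ∈ Ioc 0 ℓ₂, ∀ v ∈ Ioo 0 ℓ₃, σ₂ u ≠ σ₃ v) :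
    InjOn (concatArcs σ₁ σ₂ σ₃ ℓ₁ ℓ₂) (Ico 0 (ℓ₁ + ℓ₂ + ℓ₃)) := by
  suffices h : ∀ u ∈ Ico 0 (ℓ₁ + ℓ₂ + ℓ₃), ∀ v ∈ Ico 0 (ℓ₁ + ℓ₂ + ℓ₃), u < v →
      concatArcs σ₁ σ₂ σ₃ ℓ₁ ℓ₂ u ≠ concatArcs σ₁ σ₂ σ₃ ℓ₁ ℓ₂ v from
    fun u hu v hv huv => by_contra fun hne =>
      (lt_or_gt_of_ne hne).elim (h u hu v hv · huv) (h v hv u hu · huv.symm)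
  intro u ⟨hu0, hu⟩ v ⟨hv0, hv⟩ huv
  simp only [concatArcs]
  split_ifs <;> try (exfalso; linarith)
  · exact fun h => huv.ne (h₁.injOn ⟨hu0, ‹_›⟩ ⟨hv0, ‹_›⟩ h)
  · exact d₁₂ u ⟨hu0, ‹_›⟩ _ ⟨by linarith, by linarith⟩
  · exact d₁₃ u ⟨hu0, ‹_›⟩ _ ⟨by linarith, by linarith⟩
  · exact fun h => huv.ne (by
      linarith [h₂.injOn ⟨by linarith, by linarith⟩ ⟨by linarith, by linarith⟩ h])
  · exact d₂₃ _ ⟨by linarith, by linarith⟩ _ ⟨by linarith, by linarith⟩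
  · exact fun h => huv.ne (by
      linarith [h₃.injOn ⟨by linarith, by linarith⟩ ⟨by linarith, by linarith⟩ h])

lemma simpleGeodesicTriangle_concatArcs (hℓ₁ : 0 ≤ ℓ₁) (hℓ₂ : 0 ≤ ℓ₂) (hℓ₃ : 0 ≤ ℓ₃)
    (hL : 0 < ℓ₁ + ℓ₂ + ℓ₃)
    (h₁ : IsGeodesicOn σ₁ 0 ℓ₁) (h₂ : IsGeodesicOn σ₂ 0 ℓ₂) (h₃ : IsGeodesicOn σ₃ 0 ℓ₃)
    (h₁₂ : σ₁ ℓ₁ = σ₂ 0) (h₂₃ : σ₂ ℓ₂ = σ₃ 0) (h₃₁ : σ₃ ℓ₃ = σ₁ 0)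
    (d₁₂ : ∀ u ∈ Icc 0 ℓ₁, ∀ v ∈ Ioc 0 ℓ₂, σ₁ u ≠ σ₂ v)
    (d₁₃ : ∀ u ∈ Icc 0 ℓ₁, ∀ v ∈ Ioo 0 ℓ₃, σ₁ u ≠ σ₃ v)
    (d₂₃ : ∀ u ∈ Ioc 0 ℓ₂, ∀ v ∈ Ioo 0 ℓ₃, σ₂ u ≠ σ₃ v) :
    SimpleGeodesicTriangle (concatArcs σ₁ σ₂ σ₃ ℓ₁ ℓ₂) ℓ₁ (ℓ₁ + ℓ₂) (ℓ₁ + ℓ₂ + ℓ₃) where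
  L_pos := hL
  ha := hℓ₁
  hab := by linarith
  hbL := by linarith
  side1 := h₁.congr fun _ hu => (concatArcs_of_le hu.2).symm
  side2 := by
    have h := h₂.comp_sub_const ℓ₁
    rw [zero_add, add_comm] at h
    exact h.congr fun _ hu => (concatArcs_of_mem_Icc h₁₂ hu).symm
  side3 := by
    have h := h₃.comp_sub_const (ℓ₁ + ℓ₂)
    rw [zero_add, add_comm ℓ₃] at h
    exact h.congr fun _ hu => (concatArcs_of_ge h₁₂ h₂₃ hℓ₂ hu.1).symm
  closed := by
    rw [concatArcs_of_le hℓ₁, concatArcs_of_ge h₁₂ h₂₃ hℓ₂ (by linarith), add_sub_cancel_left, h₃₁]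
  simple := injOn_concatArcs h₁ h₂ h₃ d₁₂ d₁₃ d₂₃

end concatArcs

namespace IsTreeGraded

variable {P : Set (Set F)} {p : Set F}

lemma eq_of_nontrivial_inter (hTG : IsTreeGraded P) {q : Set F} (hp : p ∈ P) (hq : q ∈ P)
    (h : (p ∩ q).Nontrivial) : p = q :=
  by_contra fun hpq => h.not_subsingleton (hTG.T1 p hp q hq hpq)

theorem exists_piece_of_loop (hTG : IsTreeGraded P) {σ₁ σ₂ σ₃ : ℝ → F} {ℓ₁ ℓ₂ ℓ₃ : ℝ}
    (hℓ₁ : 0 ≤ ℓ₁) (hℓ₂ : 0 ≤ ℓ₂) (hℓ₃ : 0 ≤ ℓ₃) (hL : 0 < ℓ₁ + ℓ₂ + ℓ₃)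
    (h₁ : IsGeodesicOn σ₁ 0 ℓ₁) (h₂ : IsGeodesicOn σ₂ 0 ℓ₂) (h₃ : IsGeodesicOn σ₃ 0 ℓ₃)
    (h₁₂ : σ₁ ℓ₁ = σ₂ 0) (h₂₃ : σ₂ ℓ₂ = σ₃ 0) (h₃₁ : σ₃ ℓ₃ = σ₁ 0)
    (d₁₂ : ∀ u ∈ Icc 0 ℓ₁, ∀ v ∈ Ioc 0 ℓ₂, σ₁ u ≠ σ₂ v)
    (d₁₃ : ∀ u ∈ Icc 0 ℓ₁, ∀ v ∈ Ioo 0 ℓ₃, σ₁ u ≠ σ₃ v)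
    (d₂₃ : ∀ u ∈ Ioc 0 ℓ₂, ∀ v ∈ Ioo 0 ℓ₃, σ₂ u ≠ σ₃ v) :
    ∃ q ∈ P, σ₁ '' Icc 0 ℓ₁ ⊆ q ∧ σ₂ '' Icc 0 ℓ₂ ⊆ q ∧ σ₃ '' Icc 0 ℓ₃ ⊆ q := by
  obtain ⟨q, hq, hγq⟩ := hTG.T2 _ _ _ _ (simpleGeodesicTriangle_concatArcs hℓ₁ hℓ₂ hℓ₃ hL
    h₁ h₂ h₃ h₁₂ h₂₃ h₃₁ d₁₂ d₁₃ d₂₃)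
  refine ⟨q, hq, ?_, ?_, ?_⟩ <;> rintro _ ⟨u, ⟨hu0, hu⟩, rfl⟩
  · exact hγq ⟨u, ⟨hu0, by linarith⟩, concatArcs_of_le hu⟩
  · exact hγq ⟨ℓ₁ + u, ⟨by linarith, by linarith⟩,
      by rw [concatArcs_of_mem_Icc h₁₂ ⟨by linarith, by linarith⟩, add_sub_cancel_left]⟩
  · exact hγq ⟨ℓ₁ + ℓ₂ + u, ⟨by linarith, by linarith⟩,
      by rw [concatArcs_of_ge h₁₂ h₂₃ hℓ₂ (by linarith), add_sub_cancel_left]⟩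

theorem exists_piece_of_bigon (hTG : IsTreeGraded P) {γ₁ γ₂ : ℝ → F} {a b : ℝ} (hab : a < b)
    (h₁ : IsGeodesicOn γ₁ a b) (h₂ : IsGeodesicOn γ₂ a b) (ha : γ₁ a = γ₂ a) (hb : γ₁ b = γ₂ b)
    (hdisj : ∀ u ∈ Icc a b, ∀ v ∈ Ioo a b, γ₁ u ≠ γ₂ v) :
    ∃ q ∈ P, γ₁ '' Icc a b ⊆ q ∧ γ₂ '' Icc a b ⊆ q := by
  have hempty : ∀ v ∈ Ioc (0 : ℝ) 0, False := fun v hv => hv.1.not_ge hv.2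
  obtain ⟨q, hq, h₁q, -, h₂q⟩ := hTG.exists_piece_of_loop (σ₁ := fun u => γ₁ (u + a))
    (σ₂ := fun _ => γ₁ b) (σ₃ := fun u => γ₂ (b - u)) (sub_nonneg.2 hab.le) le_rfl
    (sub_nonneg.2 hab.le) (by linarith)
    (by simpa only [sub_self] using h₁.comp_add_const a) (IsGeodesicOn.const _ 0)
    (by simpa only [sub_self] using h₂.comp_const_sub b)
    (by rw [sub_add_cancel]) (by rw [sub_zero, hb]) (by rw [sub_sub_cancel, zero_add, ha])
    (fun _ _ v hv => (hempty v hv).elim)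
    (fun u hu v hv => hdisj _ (add_mem_Icc_iff_left.2 (by rwa [sub_self])) (b - v)
      ⟨by linarith [hv.2], by linarith [hv.1]⟩)
    (fun u hu _ _ => (hempty u hu).elim)
  refine ⟨q, hq, ?_, ?_⟩ <;> rintro _ ⟨r, hr, rfl⟩
  · exact h₁q ⟨r - a, sub_mem_Icc_iff_left.2 (by rwa [zero_add, sub_add_cancel]),
      by simp only [sub_add_cancel]⟩
  · exact h₂q ⟨b - r, sub_mem_Icc_iff_right.2 (by rwa [sub_zero, sub_sub_cancel]),
      by simp only [sub_sub_cancel]⟩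

theorem exists_piece_of_apply_ne (hTG : IsTreeGraded P) {γ₁ γ₂ : ℝ → F} {a b : ℝ}
    (h₁ : IsGeodesicOn γ₁ a b) (h₂ : IsGeodesicOn γ₂ a b) (ha : γ₁ a = γ₂ a) (hb : γ₁ b = γ₂ b)
    {r : ℝ} (hr : r ∈ Icc a b) (hne : γ₁ r ≠ γ₂ r) :
    ∃ a' b', a ≤ a' ∧ a' < r ∧ r < b' ∧ b' ≤ b ∧
      ∃ q ∈ P, γ₁ '' Icc a' b' ⊆ q ∧ γ₂ '' Icc a' b' ⊆ q := by
  obtain ⟨a', ha', ha'eq, ha'max⟩ := exists_isGreatest_coincidence hr.1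
    (h₁.continuousOn.mono (Icc_subset_Icc_right hr.2))
    (h₂.continuousOn.mono (Icc_subset_Icc_right hr.2)) ha
  obtain ⟨b', hb', hb'eq, hb'min⟩ := exists_isLeast_coincidence hr.2
    (h₁.continuousOn.mono (Icc_subset_Icc_left hr.1))
    (h₂.continuousOn.mono (Icc_subset_Icc_left hr.1)) hb
  have ha'r : a' < r := ha'.2.lt_of_ne fun h => hne (h ▸ ha'eq)
  have hrb' : r < b' := hb'.1.lt_of_ne fun h => hne (h ▸ hb'eq)
  have h₁' := h₁.mono ha'.1 hb'.2
  have h₂' := h₂.mono ha'.1 hb'.2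
  refine ⟨a', b', ha'.1, ha'r, hrb', hb'.2,
    hTG.exists_piece_of_bigon (ha'r.trans hrb') h₁' h₂' ha'eq hb'eq ?_⟩
  intro u hu v hv huv
  obtain rfl : u = v := h₁'.eq_of_apply_eq h₂' ha'eq hu (Ioo_subset_Icc_self hv) huv
  rcases le_total u r with hur | hru
  · exact hv.1.not_ge (ha'max u ⟨ha'.1.trans hu.1, hur⟩ huv)
  · exact hv.2.not_ge (hb'min u ⟨hru, hu.2.trans hb'.2⟩ huv)

theorem image_subset_of_endpoints_mem (hTG : IsTreeGraded P) (hp : p ∈ P) {γ : ℝ → F} {a b : ℝ}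
    (hab : a ≤ b) (h : IsGeodesicOn γ a b) (ha : γ a ∈ p) (hb : γ b ∈ p) :
    γ '' Icc a b ⊆ p := by
  obtain ⟨g, hg0, hgd, hg, hgp⟩ := hTG.pieces_geodesic p hp _ ha _ hb
  rw [h.dist_left ⟨hab, le_rfl⟩] at hgd hg hgp
  have hg' : IsGeodesicOn (fun u => g (u - a)) a b := by
    simpa only [zero_add, sub_add_cancel] using hg.comp_sub_const a
  have hg'p : (fun u => g (u - a)) '' Icc a b ⊆ p := by
    rintro _ ⟨r, hr, rfl⟩
    exact hgp ⟨r - a, sub_mem_Icc_iff_left.2 (by rwa [zero_add, sub_add_cancel]), rfl⟩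
  rintro _ ⟨r, hr, rfl⟩
  by_cases hr' : γ r = g (r - a)
  · exact hr' ▸ hg'p ⟨r, hr, rfl⟩
  obtain ⟨a', b', haa', ha'r, hrb', hb'b, q, hq, hγq, hgq⟩ := hTG.exists_piece_of_apply_ne h hg'
    (by rw [sub_self, hg0]) (by rw [hgd]) hr hr'
  obtain rfl : q = p := hTG.eq_of_nontrivial_inter hq hp <|
    ((hg'.mono haa' hb'b).nontrivial_image_inter hg'p (by
      rw [max_eq_left haa', min_eq_left hb'b]; exact ha'r.trans hrb')).mono
      (inter_subset_inter_left _ hgq)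
  exact hγq ⟨r, ⟨ha'r.le, hrb'.le⟩, rfl⟩

theorem exists_segment_of_nontrivial (hTG : IsTreeGraded P) (hp : p ∈ P) {γ : ℝ → F} {a b : ℝ}
    (h : IsGeodesicOn γ a b) (hγp : (γ '' Icc a b ∩ p).Nontrivial) :
    ∃ s t, a ≤ s ∧ s < t ∧ t ≤ b ∧ γ '' Icc s t ⊆ p := by
  obtain ⟨s, hs, t, ht, hst, hsp, htp⟩ := exists_lt_of_nontrivial_image_inter hγp
  exact ⟨s, t, hs.1, hst, ht.2,
    hTG.image_subset_of_endpoints_mem hp hst.le (h.mono hs.1 ht.2) hsp htp⟩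

theorem nontrivial_inter_of_same_endpoints (hTG : IsTreeGraded P) (hp : p ∈ P)
    {γ₁ γ₂ : ℝ → F} {a b : ℝ} (h₁ : IsGeodesicOn γ₁ a b) (h₂ : IsGeodesicOn γ₂ a b)
    (ha : γ₁ a = γ₂ a) (hb : γ₁ b = γ₂ b) (h : (γ₂ '' Icc a b ∩ p).Nontrivial) :
    (γ₁ '' Icc a b ∩ p).Nontrivial := by
  obtain ⟨s, t, has, hst, htb, hseg⟩ := hTG.exists_segment_of_nontrivial hp h₂ h
  by_cases hall : EqOn γ₁ γ₂ (Icc s t)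
  · exact h₁.nontrivial_image_inter (hall.image_eq ▸ hseg)
      (by rw [max_eq_right has, min_eq_right htb]; exact hst)
  obtain ⟨r, hr, hne⟩ := not_forall₂.1 hall
  obtain ⟨a', b', haa', ha'r, hrb', hb'b, q, hq, h₁q, h₂q⟩ :=
    hTG.exists_piece_of_apply_ne h₁ h₂ ha hb ⟨has.trans hr.1, hr.2.trans htb⟩ hne
  obtain rfl : q = p := hTG.eq_of_nontrivial_inter hq hp <|
    ((h₂.mono haa' hb'b).nontrivial_image_inter hseg
      (max_lt (lt_min (ha'r.trans hrb') (ha'r.trans_le hr.2)) (lt_min (hr.1.trans_lt hrb') hst))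
      ).mono (inter_subset_inter_left _ h₂q)
  exact h₁.nontrivial_image_inter h₁q (by
    rw [max_eq_right haa', min_eq_right hb'b]; exact ha'r.trans hrb')

section Triangle

variable {α β g : ℝ → F} {m n D : ℝ}

/-- The core of the geodesic triangle with sides `α : x → y`, `g : y → z`, `β : x → z`: `ρ` is
the last time at which `g` runs along `α` backwards, `e'` the first time after `ρ` at which `g`
joins `β` (parametrised to reach `z` at time `D`). -/
theorem nontrivial_inter_of_triangle_core (hTG : IsTreeGraded P) (hp : p ∈ P)
    (hα : IsGeodesicOn α 0 m) (hβ : IsGeodesicOn β 0 n) (hg : IsGeodesicOn g 0 D)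
    (hx : α 0 = β 0) (hy : α m = g 0) (hz : β n = g D) {ρ e' : ℝ}
    (hρ : ρ ∈ Icc 0 (min m D)) (hρeq : α (m - ρ) = g ρ)
    (hρmax : ∀ e ∈ Icc 0 (min m D), α (m - e) = g e → e ≤ ρ)
    (he' : e' ∈ Icc (max ρ (D - n)) D) (he'eq : g e' = β (e' - (D - n)))
    (he'min : ∀ e ∈ Icc (max ρ (D - n)) D, g e = β (e - (D - n)) → e' ≤ e)
    (hρe' : ρ < e') (hgp : (g '' Icc ρ e' ∩ p).Nontrivial) :
    (β '' Icc 0 n ∩ p).Nontrivial := by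
  obtain ⟨hρ0, hρmD⟩ := hρ
  have hρm : ρ ≤ m := hρmD.trans (min_le_left _ _)
  obtain ⟨he'ρn, he'D⟩ := he'
  have he'n : D - n ≤ e' := (le_max_right _ _).trans he'ρn
  set c := e' - (D - n)
  have hcn : c ≤ n := by linarith
  obtain ⟨r, ⟨hr0, hrmin⟩, hreq, hrmax⟩ := exists_isGreatest_coincidence
    (le_min (sub_nonneg.2 hρm) (sub_nonneg.2 he'n))
    (hα.continuousOn.mono (Icc_subset_Icc_right ((min_le_left _ _).trans (by linarith))))
    (hβ.continuousOn.mono (Icc_subset_Icc_right ((min_le_right _ _).trans hcn))) hx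
  have hrρ : r ≤ m - ρ := hrmin.trans (min_le_left _ _)
  have hrc : r ≤ c := hrmin.trans (min_le_right _ _)
  have d₁₂ : ∀ u ∈ Icc 0 (m - ρ - r), ∀ v ∈ Ioc 0 (e' - ρ), α (u + r) ≠ g (v + ρ) := by
    intro u ⟨hu0, hu⟩ v ⟨hv0, hv⟩
    simpa only [sub_sub_cancel] using ((hα.comp_const_sub m).mono (by simp) (by simp)
      |>.apply_ne_of_last_coincidence hg (by simp only [sub_zero, hy]) hρ0 hρmax)
      (m - (u + r)) ⟨by linarith, by linarith⟩ (v + ρ) ⟨by linarith, by linarith⟩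
  have d₁₃ : ∀ u ∈ Icc 0 (m - ρ - r), ∀ v ∈ Ioo 0 (c - r), α (u + r) ≠ β (c - v) :=
    fun u ⟨hu0, hu⟩ v ⟨hv0, hv⟩ => (hα.mono le_rfl (by linarith)).apply_ne_of_last_coincidence
      (hβ.mono le_rfl hcn) hx hr0 hrmax _ ⟨by linarith, by linarith⟩ _ ⟨by linarith, by linarith⟩
  have d₂₃ : ∀ u ∈ Ioc 0 (e' - ρ), ∀ v ∈ Ioo 0 (c - r), g (u + ρ) ≠ β (c - v) := by
    intro u ⟨hu0, hu⟩ v ⟨hv0, hv⟩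
    have hβ' := hβ.comp_sub_const (D - n)
    rw [zero_add, add_sub_cancel] at hβ'
    simpa only [sub_right_comm _ v] using (hg.mono hρ0 le_rfl).apply_ne_of_first_coincidence hβ'
      (by simp only [sub_sub_cancel, hz]) he'D he'min (u + ρ) ⟨by linarith, by linarith⟩
      (e' - v) ⟨by linarith, by linarith⟩
  obtain ⟨q, hq, -, hgq, hβq⟩ := hTG.exists_piece_of_loop (σ₁ := fun u => α (u + r))
    (σ₂ := fun u => g (u + ρ)) (σ₃ := fun u => β (c - u)) (ℓ₁ := m - ρ - r) (ℓ₂ := e' - ρ)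
    (ℓ₃ := c - r) (by linarith) (by linarith) (by linarith) (by linarith)
    ((hα.comp_add_const r).mono (by linarith) (by linarith))
    ((hg.comp_add_const ρ).mono (by linarith) (by linarith))
    ((hβ.comp_const_sub c).mono (by linarith) (by linarith))
    (by simp only [sub_add_cancel, zero_add, hρeq])
    (by simp only [sub_add_cancel, sub_zero, he'eq]) (by simp only [sub_sub_cancel, zero_add, hreq])
    d₁₂ d₁₃ d₂₃
  rw [← image_image g (· + ρ), image_add_const_Icc, zero_add, sub_add_cancel] at hgq
  rw [← image_image β (c - ·), image_const_sub_Icc, sub_zero, sub_sub_cancel] at hβq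
  obtain rfl : q = p := hTG.eq_of_nontrivial_inter hq hp (hgp.mono (inter_subset_inter_left _ hgq))
  have hne : β r ≠ β c := by
    have := d₁₂ 0 ⟨le_rfl, by linarith⟩ (e' - ρ) ⟨by linarith, le_rfl⟩
    rwa [zero_add, sub_add_cancel, hreq, he'eq] at this
  exact ⟨β r, ⟨mem_image_of_mem β ⟨hr0, hrc.trans hcn⟩, hβq ⟨r, ⟨le_rfl, hrc⟩, rfl⟩⟩,
    β c, ⟨mem_image_of_mem β ⟨hr0.trans hrc, hcn⟩, hβq ⟨c, ⟨hrc, le_rfl⟩, rfl⟩⟩, hne⟩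

theorem nontrivial_inter_of_segment (hTG : IsTreeGraded P) (hp : p ∈ P) (hm : 0 ≤ m)
    (hn : 0 ≤ n) (hα : IsGeodesicOn α 0 m) (hβ : IsGeodesicOn β 0 n) (hg : IsGeodesicOn g 0 D)
    (hx : α 0 = β 0) (hy : α m = g 0) (hz : β n = g D) {s t : ℝ} (hs : 0 ≤ s) (hst : s < t)
    (htD : t ≤ D) (hseg : g '' Icc s t ⊆ p) :
    (α '' Icc 0 m ∩ p).Nontrivial ∨ (β '' Icc 0 n ∩ p).Nontrivial := by
  have hα' : IsGeodesicOn (fun e => α (m - e)) 0 m := by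
    simpa only [sub_self, sub_zero] using hα.comp_const_sub m
  have hβ' : IsGeodesicOn (fun e => β (e - (D - n))) (D - n) D := by
    simpa only [zero_add, add_sub_cancel] using hβ.comp_sub_const (D - n)
  obtain ⟨ρ, ⟨hρ0, hρmD⟩, hρeq, hρmax⟩ := exists_isGreatest_coincidence (le_min hm (by linarith))
    (hα'.continuousOn.mono (Icc_subset_Icc_right (min_le_left _ _)))
    (hg.continuousOn.mono (Icc_subset_Icc_right (min_le_right _ _))) (by simp only [sub_zero, hy])
  have hρm : ρ ≤ m := hρmD.trans (min_le_left _ _)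
  have hρD : ρ ≤ D := hρmD.trans (min_le_right _ _)
  rcases le_or_gt t ρ with htρ | hρt
  · refine .inl ((hTG.nontrivial_inter_of_same_endpoints hp (hα'.mono le_rfl hρm)
      (hg.mono le_rfl hρD) (by simp only [sub_zero, hy]) hρeq
      ((hg.mono le_rfl hρD).nontrivial_image_inter hseg ?_)).mono (inter_subset_inter_left _ ?_))
    · rw [max_eq_right hs, min_eq_right htρ]
      exact hst
    · rw [← image_image α (m - ·), image_const_sub_Icc]
      exact image_mono (Icc_subset_Icc (by linarith) (by linarith))
  obtain ⟨e', ⟨he'ρn, he'D⟩, he'eq, he'min⟩ := exists_isLeast_coincidence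
    (max_le hρD (by linarith)) (hg.continuousOn.mono (Icc_subset_Icc_left (le_max_of_le_left hρ0)))
    (hβ'.continuousOn.mono (Icc_subset_Icc_left (le_max_right _ _)))
    (by simp only [sub_sub_cancel, hz])
  have he'ρ : ρ ≤ e' := (le_max_left _ _).trans he'ρn
  have he'n : D - n ≤ e' := (le_max_right _ _).trans he'ρn
  rcases lt_or_ge e' t with he't | hte'
  · refine .inr ((hTG.nontrivial_inter_of_same_endpoints hp
      (hβ'.mono he'n le_rfl) (hg.mono (hρ0.trans he'ρ) le_rfl)
      he'eq.symm (by simp only [sub_sub_cancel, hz])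
      ((hg.mono (hρ0.trans he'ρ) le_rfl).nontrivial_image_inter hseg ?_)).mono
      (inter_subset_inter_left _ ?_))
    · rw [min_eq_right htD]
      exact max_lt he't hst
    · rw [← image_image β (· - (D - n)), image_sub_const_Icc]
      exact image_mono (Icc_subset_Icc (by linarith) (by linarith))
  exact .inr (hTG.nontrivial_inter_of_triangle_core hp hα hβ hg hx hy hz ⟨hρ0, hρmD⟩ hρeq hρmax
    ⟨he'ρn, he'D⟩ he'eq he'min (hρt.trans_le hte')
    ((hg.mono hρ0 he'D).nontrivial_image_inter hseg (by
      rw [min_eq_right hte']; exact max_lt hρt hst)))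

theorem subsingleton_inter_of_triangle (hTG : IsTreeGraded P) (hp : p ∈ P) (hm : 0 ≤ m)
    (hn : 0 ≤ n) (hα : IsGeodesicOn α 0 m) (hβ : IsGeodesicOn β 0 n) (hg : IsGeodesicOn g 0 D)
    (hx : α 0 = β 0) (hy : α m = g 0) (hz : β n = g D)
    (hαp : (α '' Icc 0 m ∩ p).Subsingleton) (hβp : (β '' Icc 0 n ∩ p).Subsingleton) :
    (g '' Icc 0 D ∩ p).Subsingleton := by
  refine not_nontrivial_iff.1 fun hgp => ?_
  obtain ⟨s, t, hs, hst, htD, hseg⟩ := hTG.exists_segment_of_nontrivial hp hg hgp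
  rcases hTG.nontrivial_inter_of_segment hp hm hn hα hβ hg hx hy hz hs hst htD hseg with h | h
  exacts [h.not_subsingleton hαp, h.not_subsingleton hβp]

end Triangle

end IsTreeGraded

variable {P : Set (Set F)} {x y : F}

lemma mem_transversalTree_comm (hy : y ∈ transversalTree P x) : x ∈ transversalTree P y := by
  intro γ hγ0 hγd hγ p hp
  rw [dist_comm] at hγd hγ ⊢
  have hrev := hy (fun u => γ (dist x y - u)) (by simp only [sub_zero, hγd])
    (by simp only [sub_self, hγ0])
    (by simpa only [sub_self, sub_zero] using hγ.comp_const_sub (dist x y)) p hp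
  rwa [← image_image γ (dist x y - ·), image_const_sub_Icc, sub_self, sub_zero] at hrev

lemma transversalTree_subset (hF : GeodesicSpace F) (hTG : IsTreeGraded P)
    (hy : y ∈ transversalTree P x) : transversalTree P x ⊆ transversalTree P y := by
  intro z hz g hg0 hgD hg p hp
  obtain ⟨α, hα0, hαm, hα⟩ := hF x y
  obtain ⟨β, hβ0, hβn, hβ⟩ := hF x z
  exact hTG.subsingleton_inter_of_triangle hp dist_nonneg dist_nonneg hα hβ hg
    (hα0.trans hβ0.symm) (hαm.trans hg0.symm) (hβn.trans hgD.symm) (hy α hα0 hαm hα p hp)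
    (hz β hβ0 hβn hβ p hp)

end

theorem stmt_3_general {F : Type*} [MetricSpace F] (hF : GeodesicSpace F)
    (P : Set (Set F)) (hTG : IsTreeGraded P) (x y : F)
    (hy : y ∈ transversalTree P x) :
    transversalTree P x = transversalTree P y :=
  (transversalTree_subset hF hTG hy).antisymm
    (transversalTree_subset hF hTG (mem_transversalTree_comm hy))

/-- if `y ∈ T_x` then `T_x = T_y`. -/
theorem stmt_3 {F : Type*} [MetricSpace F] [CompleteSpace F] (hF : GeodesicSpace F)
    (P : Set (Set F)) (hTG : IsTreeGraded P) (x y : F)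
    (hy : y ∈ transversalTree P x) :
    transversalTree P x = transversalTree P y :=
  stmt_3_general hF P hTG x y hy
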